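/- Let p be the binary Markov random field distribution on {−1,1}^n associated to a graph G with clique set 𝒞 and potentials θ_C, and let γ := max_{u∈[n]} Σ_{l=1}^r Σ_{i_2<⋯<i_l} |θ^{u i_2⋯i_l}|_max, where |θ^{u i_2⋯i_l}|_max is the maximum absolute value of an entry of the potential of the clique {u, i_2, …, i_l} (zero if it is not a clique in 𝒞). Then for every vertex u, every x_u ∈ {−1,1}, and every configuration y ∈ {−1,1}^{[n]∖{u}} of the remaining variables, the conditional probability satisfies p(X_u = x_u | X_{[n]∖{u}} = y) ≥ (1/2) exp(−2γ) = δ. -/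

import Mathlib

open Finset

/-- The spin values `{-1, 1}`. -/
abbrev Spin : Type := ({-1, 1} : Finset ℤ)

/-- The binary Markov random field distribution on `{-1,1}^n` with clique set `𝒞`
and potentials `θ C : {-1,1}^C → ℝ`. -/
noncomputable def mrfP {n : ℕ} (𝒞 : Finset (Finset (Fin n)))
    (θ : (C : Finset (Fin n)) → (↥C → Spin) → ℝ) (x : Fin n → Spin) : ℝ :=
  Real.exp (∑ C ∈ 𝒞, θ C (fun i => x i.1)) /
    ∑ y : Fin n → Spin, Real.exp (∑ C ∈ 𝒞, θ C (fun i => y i.1))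

/-- Extend a configuration `y` on `[n] \ {u}` to a full configuration taking
value `a` at `u`. -/
def extendAt {n : ℕ} (u : Fin n) (a : Spin) (y : {v : Fin n // v ≠ u} → Spin) :
    Fin n → Spin :=
  fun v => if h : v = u then a else y ⟨v, h⟩

/-- `|θ^C|_max`: the maximum absolute value of an entry of the potential of the
clique `C`, taken to be zero if `C` is not a clique in `𝒞`. -/
noncomputable def thetaMax {n : ℕ} (𝒞 : Finset (Finset (Fin n)))
    (θ : (C : Finset (Fin n)) → (↥C → Spin) → ℝ) (C : Finset (Fin n)) : ℝ :=
  if C ∈ 𝒞 then ⨆ y : ↥C → Spin, |θ C y| else 0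

/-- `Σ_{l=1}^{r} Σ_{i_2<⋯<i_l} |θ^{u i_2 ⋯ i_l}|_max`, the inner sum running over
tuples `i_2 < ⋯ < i_l` of vertices in `[n] ∖ {u}` (equivalently, over
`(l−1)`-element subsets `T` of `[n] ∖ {u}`, via `{u, i_2, …, i_l} = insert u T`). -/
noncomputable def gammaAt {n : ℕ} (𝒞 : Finset (Finset (Fin n)))
    (θ : (C : Finset (Fin n)) → (↥C → Spin) → ℝ) (r : ℕ) (u : Fin n) : ℝ :=
  ∑ l ∈ Finset.Icc 1 r, ∑ T ∈ (Finset.univ.erase u).powersetCard (l - 1),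
    thetaMax 𝒞 θ (insert u T)

/-! The conditional law of `X_u` given the other spins is a softmax of the energies
`Σ_C θ_C(x_C)` of the two extensions of `y`. Only cliques through `u` see the spin at `u`, each
moving the energy by at most `2 |θ^C|_max` when it flips, and these cliques are among those
summed in `γ_u`. So the two energies differ by at most `2γ`, and each softmax weight is at least
`exp(-2γ)/2`. -/

theorem div_card_le_softmax {ι : Type*} [Fintype ι] (f : ι → ℝ) (a : ι) {c : ℝ}
    (h : ∀ b, f b - f a ≤ c) :
    Real.exp (-c) / Fintype.card ι ≤ Real.exp (f a) / ∑ b, Real.exp (f b) := by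
  have hcard : (0 : ℝ) < Fintype.card ι := Nat.cast_pos.mpr (Fintype.card_pos_iff.mpr ⟨a⟩)
  have hsum : 0 < ∑ b, Real.exp (f b) := sum_pos (fun b _ => Real.exp_pos _) ⟨a, mem_univ a⟩
  rw [div_le_div_iff₀ hcard hsum]
  calc Real.exp (-c) * ∑ b, Real.exp (f b) = ∑ b, Real.exp (f b - c) := by
        simp only [mul_sum, ← Real.exp_add, neg_add_eq_sub]
    _ ≤ ∑ _b : ι, Real.exp (f a) :=
        sum_le_sum fun b _ => Real.exp_le_exp.mpr (by linarith [h b])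
    _ = Real.exp (f a) * Fintype.card ι := by simp [mul_comm]

section MRF

variable {n : ℕ} (𝒞 : Finset (Finset (Fin n))) (θ : (C : Finset (Fin n)) → (↥C → Spin) → ℝ)

noncomputable def mrfEnergy (x : Fin n → Spin) : ℝ :=
  ∑ C ∈ 𝒞, θ C fun i => x i.1

theorem thetaMax_nonneg (C : Finset (Fin n)) : 0 ≤ thetaMax 𝒞 θ C := by
  unfold thetaMax
  split_ifs
  · exact Real.iSup_nonneg fun _ => abs_nonneg _
  · rfl

theorem abs_le_thetaMax {C : Finset (Fin n)} (hC : C ∈ 𝒞) (z : ↥C → Spin) :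
    |θ C z| ≤ thetaMax 𝒞 θ C := by
  rw [thetaMax, if_pos hC]
  exact le_ciSup (f := fun z => |θ C z|) (Finite.bddAbove_range _) z

theorem sum_thetaMax_le_gammaAt {r : ℕ} (hrwise : ∀ C ∈ 𝒞, C.card ≤ r) (u : Fin n) :
    ∑ C ∈ 𝒞 with u ∈ C, thetaMax 𝒞 θ C ≤ gammaAt 𝒞 θ r u := by
  set S := {C ∈ 𝒞 | u ∈ C}
  have hu : ∀ C ∈ S, u ∈ C := fun C hC => (mem_filter.mp hC).2
  -- `C ↦ (|C|, C \ {u})` is injective on cliques through `u` and lands in the index set of `γ_u`.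
  let g : Finset (Fin n) → Σ _ : ℕ, Finset (Fin n) := fun C => ⟨C.card, C.erase u⟩
  have hg : Set.InjOn g S := fun C hC C' hC' h => by
    rw [← insert_erase (hu C hC), ← insert_erase (hu C' hC')]
    exact congrArg (insert u) (Sigma.mk.inj_iff.mp h).2.eq
  have hgS : S.image g ⊆ (Icc 1 r).sigma fun l => (univ.erase u).powersetCard (l - 1) := by
    simp only [subset_iff, mem_image, mem_sigma, mem_Icc, mem_powersetCard]
    rintro _ ⟨C, hC, rfl⟩
    refine ⟨⟨card_pos.mpr ⟨u, hu C hC⟩, hrwise C (mem_filter.mp hC).1⟩,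
      erase_subset_erase u (subset_univ C), ?_⟩
    rw [card_erase_of_mem (hu C hC)]
  calc ∑ C ∈ S, thetaMax 𝒞 θ C = ∑ C ∈ S, thetaMax 𝒞 θ (insert u (g C).2) :=
        sum_congr rfl fun C hC => by rw [insert_erase (hu C hC)]
    _ = ∑ x ∈ S.image g, thetaMax 𝒞 θ (insert u x.2) :=
        (sum_image (f := fun x => thetaMax 𝒞 θ (insert u x.2)) hg).symm
    _ ≤ ∑ x ∈ (Icc 1 r).sigma (fun l => (univ.erase u).powersetCard (l - 1)),
          thetaMax 𝒞 θ (insert u x.2) :=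
        sum_le_sum_of_subset_of_nonneg hgS fun _ _ _ => thetaMax_nonneg 𝒞 θ _
    _ = gammaAt 𝒞 θ r u := by rw [gammaAt, sum_sigma]

theorem potential_sub_le {x x' : Fin n → Spin} {u : Fin n} (hxx' : ∀ v, v ≠ u → x v = x' v)
    {C : Finset (Fin n)} (hC : C ∈ 𝒞) :
    θ C (fun i => x i.1) - θ C (fun i => x' i.1) ≤ if u ∈ C then 2 * thetaMax 𝒞 θ C else 0 := by
  split_ifs with huC
  · have hx := abs_le.mp (abs_le_thetaMax 𝒞 θ hC fun i => x i.1)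
    have hx' := abs_le.mp (abs_le_thetaMax 𝒞 θ hC fun i => x' i.1)
    linarith
  · have hrestrict : (fun i : ↥C => x i.1) = fun i => x' i.1 :=
      funext fun i => hxx' i fun h => huC (h ▸ i.2)
    rw [hrestrict, sub_self]

theorem mrfEnergy_sub_le {r : ℕ} (hrwise : ∀ C ∈ 𝒞, C.card ≤ r) {x x' : Fin n → Spin}
    {u : Fin n} (hxx' : ∀ v, v ≠ u → x v = x' v) :
    mrfEnergy 𝒞 θ x - mrfEnergy 𝒞 θ x' ≤ 2 * gammaAt 𝒞 θ r u :=
  calc mrfEnergy 𝒞 θ x - mrfEnergy 𝒞 θ x'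
      = ∑ C ∈ 𝒞, (θ C (fun i => x i.1) - θ C (fun i => x' i.1)) := (sum_sub_distrib ..).symm
    _ ≤ ∑ C ∈ 𝒞, if u ∈ C then 2 * thetaMax 𝒞 θ C else 0 :=
        sum_le_sum fun C hC => potential_sub_le 𝒞 θ hxx' hC
    _ = 2 * ∑ C ∈ 𝒞 with u ∈ C, thetaMax 𝒞 θ C := by rw [← sum_filter, mul_sum]
    _ ≤ 2 * gammaAt 𝒞 θ r u := by
        linarith [sum_thetaMax_le_gammaAt 𝒞 θ hrwise u]

theorem mrfP_div_sum_mrfP {ι : Type*} [Fintype ι] (x : ι → Fin n → Spin) (a : ι) :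
    mrfP 𝒞 θ (x a) / ∑ b, mrfP 𝒞 θ (x b)
      = Real.exp (mrfEnergy 𝒞 θ (x a)) / ∑ b, Real.exp (mrfEnergy 𝒞 θ (x b)) := by
  have hZ : ∑ z : Fin n → Spin, Real.exp (mrfEnergy 𝒞 θ z) ≠ 0 :=
    (sum_pos (fun _ _ => Real.exp_pos _) ⟨x a, mem_univ _⟩).ne'
  simp only [mrfP, ← sum_div]
  exact div_div_div_cancel_right₀ hZ _ _

theorem extendAt_eq_of_ne {u v : Fin n} (hv : v ≠ u) (a b : Spin)
    (y : {v : Fin n // v ≠ u} → Spin) : extendAt u a y v = extendAt u b y v := by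
  simp only [extendAt, dif_neg hv]

end MRF

theorem cond_prob_ge_delta_general {n : ℕ}
    (𝒞 : Finset (Finset (Fin n)))
    (θ : (C : Finset (Fin n)) → (↥C → Spin) → ℝ)
    (r : ℕ) (hrwise : ∀ C ∈ 𝒞, C.card ≤ r)
    (u : Fin n) (a : Spin) (y : {v : Fin n // v ≠ u} → Spin) :
    (1 / 2 : ℝ) *
        Real.exp (-2 * Finset.univ.sup' ⟨u, Finset.mem_univ u⟩ (gammaAt 𝒞 θ r))
      ≤ mrfP 𝒞 θ (extendAt u a y) / (∑ b : Spin, mrfP 𝒞 θ (extendAt u b y)) := by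
  set γ := Finset.univ.sup' ⟨u, Finset.mem_univ u⟩ (gammaAt 𝒞 θ r)
  have hγ : gammaAt 𝒞 θ r u ≤ γ := le_sup' _ (mem_univ u)
  have hgap : ∀ b : Spin, mrfEnergy 𝒞 θ (extendAt u b y) - mrfEnergy 𝒞 θ (extendAt u a y)
      ≤ 2 * γ := fun b => by
    have := mrfEnergy_sub_le 𝒞 θ hrwise fun v hv => extendAt_eq_of_ne hv b a y
    linarith
  have hcard : Fintype.card Spin = 2 := rfl
  have hsoftmax := div_card_le_softmax (fun b => mrfEnergy 𝒞 θ (extendAt u b y)) a hgap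
  rw [hcard, Nat.cast_ofNat] at hsoftmax
  rw [mrfP_div_sum_mrfP 𝒞 θ (fun b => extendAt u b y)]
  calc (1 / 2 : ℝ) * Real.exp (-2 * γ) = Real.exp (-(2 * γ)) / 2 := by ring_nf
    _ ≤ _ := hsoftmax

/-- **Lower bound `δ` on conditional probabilities.**  For an `r`-wise binary MRF
`p` on a graph `G` with clique set `𝒞` and potentials `θ`, with
`γ := max_u Σ_{l=1}^r Σ_{i_2<⋯<i_l} |θ^{u i_2⋯i_l}|_max`, every conditional
probability of a single spin given all the others is at least
`δ = (1/2)·exp(−2γ)`:  `p(X_u = x_u | X_{[n]∖{u}} = y) ≥ (1/2) exp(−2γ)`.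
Here `p(X_u = a | X_{[n]∖{u}} = y) = p(ext_a y) / ∑_b p(ext_b y)`. -/
theorem cond_prob_ge_delta {n : ℕ} (G : SimpleGraph (Fin n))
    (𝒞 : Finset (Finset (Fin n)))
    (θ : (C : Finset (Fin n)) → (↥C → Spin) → ℝ)
    (hclique : ∀ C ∈ 𝒞, G.IsClique (C : Set (Fin n)))
    (r : ℕ) (hrwise : ∀ C ∈ 𝒞, C.card ≤ r)
    (u : Fin n) (a : Spin) (y : {v : Fin n // v ≠ u} → Spin) :
    (1 / 2 : ℝ) *
        Real.exp (-2 * Finset.univ.sup' ⟨u, Finset.mem_univ u⟩ (gammaAt 𝒞 θ r))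
      ≤ mrfP 𝒞 θ (extendAt u a y) / (∑ b : Spin, mrfP 𝒞 θ (extendAt u b y)) :=
  cond_prob_ge_delta_general 𝒞 θ r hrwise u a y
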